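/- Let ρ ∈ (−1, 1) and x ∈ ℝ. Let μ be the bivariate Gaussian probability measure on ℝ² with mean vector (0, 0) and covariance matrix [[1, ρ], [ρ, 1]]. Then μ({(z₁, z₂) ∈ ℝ² : z₁ ≤ x and z₂ ≤ x}) = Φ(x) − 2·T(x, (1 − ρ)/√(1 − ρ²)). -/

import Mathlib

/-!
The density is symmetric under swapping the coordinates, so the quadrant probability is twice
that of the half-quadrant `z₂ ≤ z₁ ≤ x`. Given `z₁ = s`, `z₂` is `N(ρ s, 1 - ρ²)`, which turns
this into `2 ∫_{-∞}^x φ(s) Φ(a s) ds` with `a = (1 - ρ) / √(1 - ρ²)`. Differentiating under the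
integral sign gives `∂T/∂h (h, a) = -φ(h) (Φ(a h) - 1/2)`, so `x ↦ Φ(x) - 2 T(x, a)` also has
derivative `2 φ(x) Φ(a x)`, and both sides vanish at `-∞`.
-/

open MeasureTheory Real

/-- Standard normal cumulative distribution function. -/
noncomputable def Phi (x : ℝ) : ℝ :=
  ∫ t in Set.Iic x, Real.exp (-t ^ 2 / 2) / Real.sqrt (2 * Real.pi)

/-- Gaussian probability density with mean `m` and standard deviation `v`. -/
noncomputable def gaussPdf (m v x : ℝ) : ℝ :=
  Real.exp (-(x - m) ^ 2 / (2 * v ^ 2)) / Real.sqrt (2 * Real.pi * v ^ 2)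

/-- Owen's t-function. -/
noncomputable def OwenT (h a : ℝ) : ℝ :=
  (1 / (2 * Real.pi)) * ∫ x in (0:ℝ)..a, Real.exp (-h ^ 2 * (1 + x ^ 2) / 2) / (1 + x ^ 2)

/-- Density of the bivariate Gaussian with mean `(m₁, m₂)` and covariance matrix
`[[A, B], [B, A]]` (assumed positive definite, i.e. `A > |B|`). -/
noncomputable def biGaussDensity (m₁ m₂ A B : ℝ) (z : ℝ × ℝ) : ℝ :=
  Real.exp (-(A * (z.1 - m₁) ^ 2 - 2 * B * (z.1 - m₁) * (z.2 - m₂) + A * (z.2 - m₂) ^ 2) /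
      (2 * (A ^ 2 - B ^ 2))) / (2 * Real.pi * Real.sqrt (A ^ 2 - B ^ 2))

open Set Filter Topology ProbabilityTheory
open scoped NNReal

local notation "φ" => gaussianPDFReal 0 1

lemma gaussianPDFReal_zero_one (t : ℝ) : φ t = exp (-t ^ 2 / 2) / √(2 * π) := by
  simp [gaussianPDFReal, div_eq_inv_mul]

lemma continuous_gaussianPDFReal (m : ℝ) (v : ℝ≥0) : Continuous (gaussianPDFReal m v) := by
  unfold gaussianPDFReal
  fun_prop

lemma hasDerivAt_setIntegral_Iic {g : ℝ → ℝ} (hg : Continuous g) (hgi : Integrable g) (x : ℝ) :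
    HasDerivAt (fun y => ∫ t in Iic y, g t) (g x) x := by
  have hsplit : (fun y => ∫ t in Iic y, g t) = fun y => (∫ t in Iic 0, g t) + ∫ t in 0..y, g t := by
    funext y
    rw [← intervalIntegral.integral_Iic_sub_Iic hgi.integrableOn hgi.integrableOn]
    ring
  rw [hsplit]
  exact (intervalIntegral.integral_hasDerivAt_right hgi.intervalIntegrable
    (hg.stronglyMeasurableAtFilter _ _) hg.continuousAt).const_add _

lemma Phi_eq_integral (x : ℝ) : Phi x = ∫ t in Iic x, φ t := by
  simp only [Phi, gaussianPDFReal_zero_one]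

lemma integral_Iic_gaussianPDFReal_eq_measureReal (m : ℝ) {v : ℝ≥0} (hv : v ≠ 0) (x : ℝ) :
    ∫ t in Iic x, gaussianPDFReal m v t = (gaussianReal m v).real (Iic x) := by
  rw [measureReal_def, gaussianReal_apply_eq_integral _ hv, ENNReal.toReal_ofReal
    (setIntegral_nonneg measurableSet_Iic fun t _ => gaussianPDFReal_nonneg m v t)]

lemma Phi_eq_cdf : Phi = cdf (gaussianReal 0 1) := by
  ext x
  rw [cdf_eq_real, Phi_eq_integral, integral_Iic_gaussianPDFReal_eq_measureReal 0 one_ne_zero]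

lemma hasDerivAt_Phi (x : ℝ) : HasDerivAt Phi (φ x) x := by
  simpa only [← Phi_eq_integral] using
    hasDerivAt_setIntegral_Iic (continuous_gaussianPDFReal 0 1) (integrable_gaussianPDFReal 0 1) x

lemma continuous_Phi : Continuous Phi :=
  continuous_iff_continuousAt.2 fun x => (hasDerivAt_Phi x).continuousAt

lemma Phi_sub_Phi (a b : ℝ) : Phi b - Phi a = ∫ t in a..b, φ t := by
  simp only [Phi_eq_integral]
  exact intervalIntegral.integral_Iic_sub_Iic (integrable_gaussianPDFReal 0 1).integrableOn
    (integrable_gaussianPDFReal 0 1).integrableOn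

lemma Phi_zero : Phi 0 = 1 / 2 := by
  have hint := integrable_gaussianPDFReal 0 1
  have hsymm : ∫ t in Iic 0, φ t = ∫ t in Ioi 0, φ t := by
    simpa [gaussianPDFReal_zero_one] using integral_comp_neg_Iic 0 φ
  have htotal := intervalIntegral.integral_Iic_add_Ioi (b := 0) hint.integrableOn hint.integrableOn
  rw [integral_gaussianPDFReal_eq_one 0 one_ne_zero] at htotal
  rw [Phi_eq_integral]
  linarith

lemma tendsto_Phi_atBot : Tendsto Phi atBot (𝓝 0) :=
  Phi_eq_cdf ▸ tendsto_cdf_atBot _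

lemma abs_Phi_le_one (x : ℝ) : |Phi x| ≤ 1 := by
  rw [Phi_eq_cdf, abs_of_nonneg (cdf_nonneg _ x)]
  exact cdf_le_one _ x

lemma integral_Iic_gaussianPDFReal (m : ℝ) {v : ℝ≥0} (hv : v ≠ 0) (y : ℝ) :
    ∫ t in Iic y, gaussianPDFReal m v t = Phi ((y - m) / √v) := by
  have hσ : 0 < √(v : ℝ) := Real.sqrt_pos.2 (by positivity)
  have hmap : (gaussianReal 0 1).map (fun u => √v * u + m) = gaussianReal m v := by
    change Measure.map ((· + m) ∘ (√v * ·)) _ = _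
    rw [← Measure.map_map (measurable_add_const m) (measurable_const_mul _),
      gaussianReal_map_const_mul, gaussianReal_map_add_const]
    congr
    · simp
    · ext; simp
  have hpre : (fun u => √v * u + m) ⁻¹' Iic y = Iic ((y - m) / √v) := by
    ext u
    simp only [mem_preimage, mem_Iic, le_div_iff₀ hσ]
    constructor <;> intro h <;> linarith
  rw [integral_Iic_gaussianPDFReal_eq_measureReal m hv, ← hmap,
    map_measureReal_apply (by fun_prop) measurableSet_Iic, hpre, Phi_eq_cdf, cdf_eq_real]

lemma hasDerivAt_integral_exp_neg_sq_mul_one_add_sq_div (a x : ℝ) :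
    HasDerivAt (fun h => ∫ t in 0..a, exp (-h ^ 2 * (1 + t ^ 2) / 2) / (1 + t ^ 2))
      (∫ t in 0..a, -x * exp (-x ^ 2 * (1 + t ^ 2) / 2)) x := by
  have hpos (t : ℝ) : (0 : ℝ) < 1 + t ^ 2 := by positivity
  have hderiv (t h : ℝ) : HasDerivAt (fun h => exp (-h ^ 2 * (1 + t ^ 2) / 2) / (1 + t ^ 2))
      (-h * exp (-h ^ 2 * (1 + t ^ 2) / 2)) h := by
    refine ((((hasDerivAt_pow 2 h).neg.mul_const (1 + t ^ 2)).div_const 2).exp.div_const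
      (1 + t ^ 2)).congr_deriv ?_
    simp only [Pi.neg_apply, Nat.cast_ofNat]
    field_simp [(hpos t).ne']
    ring
  have hbound (t h : ℝ) (hh : h ∈ Metric.ball x 1) :
      ‖-h * exp (-h ^ 2 * (1 + t ^ 2) / 2)‖ ≤ |x| + 1 := by
    have hexp : exp (-h ^ 2 * (1 + t ^ 2) / 2) ≤ 1 :=
      exp_le_one_iff.2 (by nlinarith [sq_nonneg h, sq_nonneg t])
    have hh' : |h| ≤ |x| + 1 := by
      have := abs_sub_abs_le_abs_sub h x
      rw [Metric.mem_ball, Real.dist_eq] at hh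
      linarith
    rw [norm_mul, norm_neg, Real.norm_eq_abs, Real.norm_of_nonneg (exp_nonneg _)]
    nlinarith [abs_nonneg h, exp_nonneg (-h ^ 2 * (1 + t ^ 2) / 2)]
  have hcont (h : ℝ) : Continuous fun t : ℝ => exp (-h ^ 2 * (1 + t ^ 2) / 2) / (1 + t ^ 2) :=
    by fun_prop (disch := exact fun t => (hpos t).ne')
  exact (intervalIntegral.hasDerivAt_integral_of_dominated_loc_of_deriv_le
    (Metric.ball_mem_nhds x one_pos) (Eventually.of_forall fun h => (hcont h).aestronglyMeasurable)
    ((hcont x).intervalIntegrable 0 a) (by fun_prop : Continuous _).aestronglyMeasurable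
    (Eventually.of_forall fun t _ h hh => hbound t h hh) intervalIntegrable_const
    (Eventually.of_forall fun t _ h _ => hderiv t h)).2

lemma integral_mul_exp_neg_sq_mul_one_add_sq (a x : ℝ) :
    ∫ t in 0..a, x * exp (-x ^ 2 * (1 + t ^ 2) / 2) = 2 * π * φ x * (Phi (a * x) - Phi 0) := by
  -- after factoring out `2π φ(x)`, the substitution `u = x t` leaves `∫₀^{a x} φ`
  have hfactor (t : ℝ) :
      x * exp (-x ^ 2 * (1 + t ^ 2) / 2) = 2 * π * φ x * x * φ (x * t) := by
    have hexp : exp (-x ^ 2 * (1 + t ^ 2) / 2) = exp (-x ^ 2 / 2) * exp (-(x * t) ^ 2 / 2) := by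
      rw [← exp_add]
      ring_nf
    rw [gaussianPDFReal_zero_one, gaussianPDFReal_zero_one, hexp]
    field_simp
    rw [Real.sq_sqrt (by positivity)]
    ring
  simp_rw [hfactor]
  rw [intervalIntegral.integral_const_mul, mul_assoc, intervalIntegral.mul_integral_comp_mul_left,
    Phi_sub_Phi, mul_zero, mul_comm x a]

lemma hasDerivAt_OwenT (a x : ℝ) :
    HasDerivAt (fun h => OwenT h a) (-(φ x * (Phi (a * x) - 1 / 2))) x := by
  refine ((hasDerivAt_integral_exp_neg_sq_mul_one_add_sq_div a x).const_mul
    (1 / (2 * π))).congr_deriv ?_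
  simp only [neg_mul x]
  rw [intervalIntegral.integral_neg, integral_mul_exp_neg_sq_mul_one_add_sq, Phi_zero]
  field_simp

lemma abs_OwenT_le (h a : ℝ) : |OwenT h a| ≤ |a| * exp (-h ^ 2 / 2) / (2 * π) := by
  have hintegrand (t : ℝ) :
      ‖exp (-h ^ 2 * (1 + t ^ 2) / 2) / (1 + t ^ 2)‖ ≤ exp (-h ^ 2 / 2) := by
    have hpos : (1 : ℝ) ≤ 1 + t ^ 2 := by nlinarith [sq_nonneg t]
    rw [Real.norm_of_nonneg (by positivity)]
    calc exp (-h ^ 2 * (1 + t ^ 2) / 2) / (1 + t ^ 2) ≤ exp (-h ^ 2 * (1 + t ^ 2) / 2) :=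
          div_le_self (exp_nonneg _) hpos
      _ ≤ exp (-h ^ 2 / 2) := exp_le_exp.2 (by nlinarith [sq_nonneg h, sq_nonneg (h * t)])
  have hintegral := intervalIntegral.norm_integral_le_of_norm_le_const (a := 0) (b := a)
    fun t _ => hintegrand t
  rw [sub_zero, Real.norm_eq_abs] at hintegral
  rw [OwenT, abs_mul, abs_of_pos (by positivity : 0 < 1 / (2 * π))]
  calc 1 / (2 * π) * |∫ t in 0..a, exp (-h ^ 2 * (1 + t ^ 2) / 2) / (1 + t ^ 2)|
      ≤ 1 / (2 * π) * (exp (-h ^ 2 / 2) * |a|) := by gcongr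
    _ = |a| * exp (-h ^ 2 / 2) / (2 * π) := by ring

lemma tendsto_OwenT_atBot (a : ℝ) : Tendsto (fun h => OwenT h a) atBot (𝓝 0) := by
  have hsq : Tendsto (fun h : ℝ => -h ^ 2 / 2) atBot atBot :=
    (tendsto_neg_atTop_atBot.comp (tendsto_pow_atTop two_ne_zero |>.comp tendsto_neg_atBot_atTop
      |>.congr fun h => by simp)).atBot_div_const two_pos
  have hbound : Tendsto (fun h : ℝ => |a| * exp (-h ^ 2 / 2) / (2 * π)) atBot (𝓝 0) := by
    simpa using ((tendsto_exp_atBot.comp hsq).const_mul |a|).div_const (2 * π)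
  exact squeeze_zero_norm (fun h => (Real.norm_eq_abs _).le.trans (abs_OwenT_le h a)) hbound

lemma two_mul_integral_Iic_mul_Phi_mul (a x : ℝ) :
    2 * ∫ s in Iic x, φ s * Phi (a * s) = Phi x - 2 * OwenT x a := by
  have hint : Integrable fun s => φ s * Phi (a * s) :=
    (integrable_gaussianPDFReal 0 1).mul_bdd (continuous_Phi.comp
      (continuous_const_mul a)).aestronglyMeasurable (ae_of_all _ fun s => abs_Phi_le_one (a * s))
  have hderiv (y : ℝ) :
      HasDerivAt (fun y => Phi y - 2 * OwenT y a) (2 * (φ y * Phi (a * y))) y := by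
    refine ((hasDerivAt_Phi y).sub ((hasDerivAt_OwenT a y).const_mul 2)).congr_deriv ?_
    ring
  have hlim : Tendsto (fun y => Phi y - 2 * OwenT y a) atBot (𝓝 0) := by
    simpa using tendsto_Phi_atBot.sub ((tendsto_OwenT_atBot a).const_mul 2)
  rw [← integral_const_mul, integral_Iic_of_hasDerivAt_of_tendsto' (fun y _ => hderiv y)
    (hint.const_mul 2).integrableOn hlim, sub_zero]

lemma toReal_withDensity_ofReal_apply {α : Type*} [MeasurableSpace α] {μ : Measure α} [SFinite μ]
    {f : α → ℝ} (hf : Integrable f μ) (hf₀ : 0 ≤ f) (s : Set α) :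
    (μ.withDensity (fun z => ENNReal.ofReal (f z)) s).toReal = ∫ z in s, f z ∂μ := by
  rw [withDensity_apply' _ s, ← ofReal_integral_eq_lintegral_ofReal hf.integrableOn
    (ae_of_all _ hf₀), ENNReal.toReal_ofReal (integral_nonneg hf₀)]

section Fiberwise

variable {α β : Type*} [MeasurableSpace α] [MeasurableSpace β] {μ : Measure α} {ν : Measure β}
  [SFinite μ] [SFinite ν]

lemma setIntegral_prod_fiberwise {f : α × β → ℝ} (hf : Integrable f (μ.prod ν)) {A : Set α}
    {B : α → Set β} (hA : MeasurableSet A)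
    (hT : MeasurableSet {z : α × β | z.1 ∈ A ∧ z.2 ∈ B z.1}) :
    ∫ z in {z : α × β | z.1 ∈ A ∧ z.2 ∈ B z.1}, f z ∂(μ.prod ν) =
      ∫ s in A, ∫ t in B s, f (s, t) ∂ν ∂μ := by
  set T := {z : α × β | z.1 ∈ A ∧ z.2 ∈ B z.1}
  rw [← integral_indicator hT, integral_prod _ (hf.indicator hT), ← integral_indicator hA]
  congr 1 with s
  by_cases hs : s ∈ A
  · have hfiber : Prod.mk s ⁻¹' T = B s := by ext t; simp [T, hs]
    rw [indicator_of_mem hs, ← hfiber, ← integral_indicator (measurable_prodMk_left hT)]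
    simp_rw [← indicator_comp_right]
    rfl
  · simp [T, hs]

end Fiberwise

lemma setIntegral_Iic_prod_Iic_of_swap_eq {f : ℝ × ℝ → ℝ} (hf : Integrable f)
    (hswap : ∀ z, f z.swap = f z) (x : ℝ) :
    ∫ z in Iic x ×ˢ Iic x, f z = 2 * ∫ s in Iic x, ∫ t in Iic s, f (s, t) := by
  set L := {z : ℝ × ℝ | z.1 ∈ Iic x ∧ z.2 ∈ Iic z.1}
  set L' := {z : ℝ × ℝ | z.1 ∈ Iic x ∧ z.2 ∈ Iio z.1}
  have hL : MeasurableSet L := (measurableSet_le measurable_fst measurable_const).inter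
    (measurableSet_le measurable_snd measurable_fst)
  have hL' : MeasurableSet L' := (measurableSet_le measurable_fst measurable_const).inter
    (measurableSet_lt measurable_snd measurable_fst)
  have hsplit : Iic x ×ˢ Iic x = L ∪ Prod.swap ⁻¹' L' := by
    ext z
    simp only [L, L', mem_prod, mem_union, mem_ofPred_eq, mem_preimage, Prod.fst_swap,
      Prod.snd_swap, mem_Iic, mem_Iio]
    constructor
    · rintro ⟨h1, h2⟩
      rcases le_or_gt z.2 z.1 with h | h
      exacts [Or.inl ⟨h1, h⟩, Or.inr ⟨h2, h⟩]
    · rintro (⟨h1, h⟩ | ⟨h2, h⟩)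
      exacts [⟨h1, h.trans h1⟩, ⟨h.le.trans h2, h2⟩]
  have hdisj : Disjoint L (Prod.swap ⁻¹' L') := by
    rw [disjoint_left]
    rintro z ⟨-, hle⟩ ⟨-, hlt⟩
    exact not_lt.2 (mem_Iic.1 hle) (mem_Iio.1 hlt)
  have hreflect : ∫ z in Prod.swap ⁻¹' L', f z = ∫ z in L', f z := by
    rw [Measure.volume_eq_prod, ← Measure.measurePreserving_swap.setIntegral_preimage_emb
      MeasurableEquiv.prodComm.measurableEmbedding f L']
    simp_rw [hswap]
  rw [hsplit, setIntegral_union hdisj (measurable_swap hL') hf.integrableOn hf.integrableOn,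
    hreflect, Measure.volume_eq_prod, setIntegral_prod_fiberwise hf measurableSet_Iic hL,
    setIntegral_prod_fiberwise hf measurableSet_Iic hL']
  simp_rw [integral_Iic_eq_integral_Iio]
  ring

lemma biGaussDensity_eq_mul {m₁ m₂ A B : ℝ} (hAB : |B| < A) (s t : ℝ) :
    biGaussDensity m₁ m₂ A B (s, t) = gaussianPDFReal m₁ A.toNNReal s *
      gaussianPDFReal (m₂ + B / A * (s - m₁)) ((A ^ 2 - B ^ 2) / A).toNNReal t := by
  have hA : 0 < A := (abs_nonneg B).trans_lt hAB
  have hD : 0 < A ^ 2 - B ^ 2 := by nlinarith [sq_abs B, abs_nonneg B]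
  have hv : 0 < (A ^ 2 - B ^ 2) / A := div_pos hD hA
  -- complete the square in `t`
  have hexp : -(A * (s - m₁) ^ 2 - 2 * B * (s - m₁) * (t - m₂) + A * (t - m₂) ^ 2) /
      (2 * (A ^ 2 - B ^ 2)) = -(s - m₁) ^ 2 / (2 * A) +
        -(t - (m₂ + B / A * (s - m₁))) ^ 2 / (2 * ((A ^ 2 - B ^ 2) / A)) := by
    field_simp
    ring
  have hnorm : √(2 * π * A) * √(2 * π * ((A ^ 2 - B ^ 2) / A)) = 2 * π * √(A ^ 2 - B ^ 2) := by
    rw [← Real.sqrt_mul (by positivity), show 2 * π * A * (2 * π * ((A ^ 2 - B ^ 2) / A)) =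
      (2 * π) ^ 2 * (A ^ 2 - B ^ 2) by field_simp, Real.sqrt_mul (by positivity),
      Real.sqrt_sq (by positivity)]
  simp only [biGaussDensity, gaussianPDFReal, Real.coe_toNNReal _ hA.le, Real.coe_toNNReal _ hv.le,
    hexp, exp_add, ← hnorm]
  field_simp

lemma biGaussDensity_swap (m A B : ℝ) (z : ℝ × ℝ) :
    biGaussDensity m m A B z.swap = biGaussDensity m m A B z := by
  simp only [biGaussDensity, Prod.fst_swap, Prod.snd_swap]
  ring_nf

lemma biGaussDensity_nonneg (m₁ m₂ A B : ℝ) : 0 ≤ biGaussDensity m₁ m₂ A B := fun z => by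
  unfold biGaussDensity
  positivity

lemma integrable_biGaussDensity {m₁ m₂ A B : ℝ} (hAB : |B| < A) :
    Integrable (biGaussDensity m₁ m₂ A B) := by
  have hv : ((A ^ 2 - B ^ 2) / A).toNNReal ≠ 0 := by
    have hA : 0 < A := (abs_nonneg B).trans_lt hAB
    have hD : 0 < A ^ 2 - B ^ 2 := by nlinarith [sq_abs B, abs_nonneg B]
    exact (Real.toNNReal_pos.2 (div_pos hD hA)).ne'
  have hcont : Continuous (biGaussDensity m₁ m₂ A B) := by
    unfold biGaussDensity
    fun_prop
  rw [Measure.volume_eq_prod, integrable_prod_iff hcont.aestronglyMeasurable]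
  simp only [biGaussDensity_eq_mul hAB, norm_mul,
    Real.norm_of_nonneg (gaussianPDFReal_nonneg _ _ _), integral_const_mul,
    integral_gaussianPDFReal_eq_one _ hv, mul_one]
  exact ⟨ae_of_all _ fun s => (integrable_gaussianPDFReal _ _).const_mul _,
    integrable_gaussianPDFReal _ _⟩

lemma integral_Iic_biGaussDensity {ρ : ℝ} (hρ : |ρ| < 1) (s : ℝ) :
    ∫ t in Iic s, biGaussDensity 0 0 1 ρ (s, t) = φ s * Phi ((1 - ρ) / √(1 - ρ ^ 2) * s) := by
  have hv : 0 < 1 - ρ ^ 2 := by nlinarith [sq_abs ρ, abs_nonneg ρ]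
  simp_rw [biGaussDensity_eq_mul hρ, one_pow, div_one, zero_add, sub_zero, Real.toNNReal_one]
  rw [integral_const_mul, integral_Iic_gaussianPDFReal _ (Real.toNNReal_pos.2 hv).ne',
    Real.coe_toNNReal _ hv.le]
  congr 2
  ring

theorem stmt_3 (ρ x : ℝ) (hρ : ρ ∈ Set.Ioo (-1 : ℝ) 1) :
    (((volume : Measure (ℝ × ℝ)).withDensity
          (fun z => ENNReal.ofReal (biGaussDensity 0 0 1 ρ z)))
          {z : ℝ × ℝ | z.1 ≤ x ∧ z.2 ≤ x}).toReal
      = Phi x - 2 * OwenT x ((1 - ρ) / Real.sqrt (1 - ρ ^ 2)) := by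
  have hρ' : |ρ| < 1 := abs_lt.2 hρ
  have hquadrant : {z : ℝ × ℝ | z.1 ≤ x ∧ z.2 ≤ x} = Iic x ×ˢ Iic x := rfl
  rw [toReal_withDensity_ofReal_apply (integrable_biGaussDensity hρ')
      (biGaussDensity_nonneg 0 0 1 ρ), hquadrant, setIntegral_Iic_prod_Iic_of_swap_eq
      (integrable_biGaussDensity hρ') (biGaussDensity_swap 0 1 ρ)]
  simp_rw [integral_Iic_biGaussDensity hρ']
  exact two_mul_integral_Iic_mul_Phi_mul _ x
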